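/- Let φ be a 2-cocycle on B(q) satisfying φ(L_{α,i}, L_{0,0}) = 0 for all α ≠ 0, i ∈ ℤ_{≥0}, and φ(L_{−1,i}, L_{1,0}) = 0 for all i ∈ ℤ_{≥0}. Then: (1) φ(L_{α,i}, L_{−α,i}) = 0 for all α ∈ ℤ whenever i ≠ 0; and (2) φ(L_{α,0}, L_{−α,0}) = ((α³ − α)/6) · φ(L_{2,0}, L_{−2,0}) for all α ∈ ℤ. -/

import Mathlib

/-!
Everything comes from the cocycle identity on triples of basis vectors. The triple
`(L_{α,i}, L_{1,0}, L_{-α-1,j})`, together with `φ(L_{-1,·}, L_{1,0}) = 0`, relates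
`φ(L_{α+1,i}, L_{-α-1,j})` to `φ(L_{α,i}, L_{-α,j})`; the triple `(L_{0,1}, L_{α,i}, L_{-α,j})`
shows that, once `φ(L_{0,1}, L_{0,·})` vanishes, `φ(L_{α,i}, L_{-α,j})` depends only on `i + j`
for `α ≠ 0`. The vanishing of `φ(L_{0,1}, L_{0,k})` holds because the values
`φ(L_{1,s}, L_{-1,t})` with `s + t = k + 1` form an arithmetic progression with step
`φ(L_{1,1}, L_{-1,k})` that vanishes at both ends. Comparing the first relation for the two
splittings `(0, n + 1)` and `(1, n)` of a positive level forces the values there to vanish; at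
level `0` it becomes the recursion `(α - 1) P(α + 1) = (α + 2) P(α)` for
`P(α) = φ(L_{α,0}, L_{-α,0})`, whose solutions are the multiples of `α³ - α`.
-/

variable {B : Type} [LieRing B] [LieAlgebra ℂ B]

/-- A 2-cocycle on a complex Lie algebra `B`: a bilinear form `ψ : B × B → ℂ` which is
skew-symmetric and satisfies the cocycle identity
`ψ([x,y],z) + ψ([y,z],x) + ψ([z,x],y) = 0`. -/
def IsTwoCocycle (ψ : B →ₗ[ℂ] B →ₗ[ℂ] ℂ) : Prop :=
  (∀ x y : B, ψ x y = - ψ y x) ∧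
  (∀ x y z : B, ψ ⁅x, y⁆ z + ψ ⁅y, z⁆ x + ψ ⁅z, x⁆ y = 0)

/-- A 2-coboundary (trivial 2-cocycle): `ψ(x,y) = f([x,y])` for some linear
`f : B → ℂ`. -/
def IsTwoCoboundary (ψ : B →ₗ[ℂ] B →ₗ[ℂ] ℂ) : Prop :=
  ∃ f : B →ₗ[ℂ] ℂ, ∀ x y : B, ψ x y = f ⁅x, y⁆

theorem IsTwoCocycle.apply_self {φ : B →ₗ[ℂ] B →ₗ[ℂ] ℂ} (hφ : IsTwoCocycle φ) (x : B) :
    φ x x = 0 := by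
  linear_combination (1 / 2 : ℂ) * hφ.1 x x

def IsBlockFamily (q : ℕ) (L : ℤ × ℕ → B) : Prop :=
  ∀ (α β : ℤ) (i j : ℕ), ⁅L (α, i), L (β, j)⁆ =
    (((β * ((i : ℤ) + q) - α * ((j : ℤ) + q)) : ℤ) : ℂ) • L (α + β, i + j)

namespace IsBlockFamily

variable {q : ℕ} {L : ℤ × ℕ → B} {φ : B →ₗ[ℂ] B →ₗ[ℂ] ℂ}

theorem cocycle_triple (hL : IsBlockFamily q L) (hφ : IsTwoCocycle φ) (α β γ : ℤ)
    (i j k : ℕ) :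
    (((β * ((i : ℤ) + q) - α * ((j : ℤ) + q)) : ℤ) : ℂ) * φ (L (α + β, i + j)) (L (γ, k)) +
      (((γ * ((j : ℤ) + q) - β * ((k : ℤ) + q)) : ℤ) : ℂ) * φ (L (β + γ, j + k)) (L (α, i)) +
      (((α * ((k : ℤ) + q) - γ * ((i : ℤ) + q)) : ℤ) : ℂ) * φ (L (γ + α, k + i)) (L (β, j))
      = 0 := by
  simpa only [hL _ _ _ _, map_smul, LinearMap.smul_apply, smul_eq_mul] using
    hφ.2 (L (α, i)) (L (β, j)) (L (γ, k))

theorem cocycle_succ_degree (hL : IsBlockFamily q L) (hφ : IsTwoCocycle φ)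
    (h2 : ∀ i : ℕ, φ (L (-1, i)) (L (1, 0)) = 0) (α : ℤ) (i j : ℕ) :
    ((α : ℂ) * q - i - q) * φ (L (α + 1, i)) (L (-(α + 1), j)) =
      ((j : ℂ) + ((α : ℂ) + 2) * q) * φ (L (α, i)) (L (-α, j)) := by
  have h := hL.cocycle_triple hφ α 1 (-(α + 1)) i 0 j
  rw [show (1 : ℤ) + -(α + 1) = -α by ring, show -(α + 1) + α = -1 by ring, add_zero, zero_add,
    h2, hφ.1 (L (-α, j))] at h
  push_cast at h
  linear_combination -h

theorem cocycle_shift_identity (hL : IsBlockFamily q L) (hφ : IsTwoCocycle φ) {α : ℤ}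
    (hα : α ≠ 0) (i j : ℕ) :
    (1 + (q : ℂ)) * φ (L (α, i + 1)) (L (-α, j)) +
        ((i : ℂ) + j + 2 * q) * φ (L (0, 1)) (L (0, i + j)) =
      (1 + (q : ℂ)) * φ (L (α, i)) (L (-α, j + 1)) := by
  have h := hL.cocycle_triple hφ 0 α (-α) 1 i j
  rw [zero_add, add_neg_cancel, add_zero, add_comm 1 i, hφ.1 (L (0, i + j)),
    hφ.1 (L (-α, j + 1))] at h
  push_cast at h
  refine mul_left_cancel₀ (Int.cast_ne_zero.mpr hα : (α : ℂ) ≠ 0) ?_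
  linear_combination h

theorem cocycle_one_zero_eq_zero (hφ : IsTwoCocycle φ)
    (h2 : ∀ i : ℕ, φ (L (-1, i)) (L (1, 0)) = 0) (m : ℕ) : φ (L (1, 0)) (L (-1, m)) = 0 := by
  rw [hφ.1, h2, neg_zero]

theorem cocycle_zero_zero_eq_zero (hq : 0 < q) (hL : IsBlockFamily q L) (hφ : IsTwoCocycle φ)
    (h2 : ∀ i : ℕ, φ (L (-1, i)) (L (1, 0)) = 0) (m : ℕ) : φ (L (0, 0)) (L (0, m)) = 0 := by
  have h := hL.cocycle_succ_degree hφ h2 0 0 m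
  rw [zero_add, cocycle_one_zero_eq_zero hφ h2, mul_zero, neg_zero, eq_comm, mul_eq_zero] at h
  exact h.resolve_left (by exact_mod_cast (show m + (0 + 2) * q ≠ 0 by omega))

theorem cocycle_neg_one_zero_eq_zero (hq : 0 < q) (hL : IsBlockFamily q L)
    (hφ : IsTwoCocycle φ) (h2 : ∀ i : ℕ, φ (L (-1, i)) (L (1, 0)) = 0) (m : ℕ) :
    φ (L (-1, 0)) (L (1, m)) = 0 := by
  have h := hL.cocycle_succ_degree hφ h2 (-1) 0 m
  rw [neg_add_cancel, neg_zero, neg_neg, cocycle_zero_zero_eq_zero hq hL hφ h2, mul_zero, eq_comm,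
    mul_eq_zero] at h
  exact h.resolve_left (by norm_num; exact_mod_cast (show m + q ≠ 0 by omega))

theorem cocycle_zero_one_mul_eq (hL : IsBlockFamily q L) (hφ : IsTwoCocycle φ)
    (h2 : ∀ i : ℕ, φ (L (-1, i)) (L (1, 0)) = 0) (k : ℕ) :
    ((k : ℂ) + 2 * q) * φ (L (0, 1)) (L (0, k)) = -(1 + (q : ℂ)) * φ (L (1, 1)) (L (-1, k)) := by
  have h := hL.cocycle_shift_identity hφ one_ne_zero 0 k
  simp only [zero_add, cocycle_one_zero_eq_zero hφ h2, Nat.cast_zero] at h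
  linear_combination h

theorem cocycle_one_succ (hL : IsBlockFamily q L) (hφ : IsTwoCocycle φ)
    (h2 : ∀ i : ℕ, φ (L (-1, i)) (L (1, 0)) = 0) (i j : ℕ) :
    φ (L (1, i + 1)) (L (-1, j)) = φ (L (1, i)) (L (-1, j + 1)) + φ (L (1, 1)) (L (-1, i + j)) := by
  have h := hL.cocycle_shift_identity hφ one_ne_zero i j
  have h' := hL.cocycle_zero_one_mul_eq hφ h2 (i + j)
  push_cast at h h'
  refine mul_left_cancel₀ (by exact_mod_cast (show 1 + q ≠ 0 by omega) : 1 + (q : ℂ) ≠ 0) ?_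
  linear_combination h - h'

theorem cocycle_one_add_one (hL : IsBlockFamily q L) (hφ : IsTwoCocycle φ)
    (h2 : ∀ i : ℕ, φ (L (-1, i)) (L (1, 0)) = 0) (s j : ℕ) :
    φ (L (1, s + 1)) (L (-1, j)) = ((s : ℂ) + 1) * φ (L (1, 1)) (L (-1, s + j)) := by
  induction s generalizing j with
  | zero => simp
  | succ s ih =>
    rw [hL.cocycle_one_succ hφ h2, ih, show s + (j + 1) = s + 1 + j by omega]
    push_cast
    ring

theorem cocycle_one_one_eq_zero (hq : 0 < q) (hL : IsBlockFamily q L) (hφ : IsTwoCocycle φ)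
    (h2 : ∀ i : ℕ, φ (L (-1, i)) (L (1, 0)) = 0) (k : ℕ) : φ (L (1, 1)) (L (-1, k)) = 0 := by
  have h := hL.cocycle_one_add_one hφ h2 k 0
  rw [add_zero, hφ.1, cocycle_neg_one_zero_eq_zero hq hL hφ h2, neg_zero, eq_comm, mul_eq_zero] at h
  exact h.resolve_left (by exact_mod_cast k.succ_ne_zero)

theorem cocycle_zero_one_eq_zero (hq : 0 < q) (hL : IsBlockFamily q L) (hφ : IsTwoCocycle φ)
    (h2 : ∀ i : ℕ, φ (L (-1, i)) (L (1, 0)) = 0) (k : ℕ) : φ (L (0, 1)) (L (0, k)) = 0 := by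
  have h := hL.cocycle_zero_one_mul_eq hφ h2 k
  rw [hL.cocycle_one_one_eq_zero hq hφ h2, mul_zero, mul_eq_zero] at h
  exact h.resolve_left (by exact_mod_cast (show k + 2 * q ≠ 0 by omega))

theorem cocycle_shift (hq : 0 < q) (hL : IsBlockFamily q L) (hφ : IsTwoCocycle φ)
    (h2 : ∀ i : ℕ, φ (L (-1, i)) (L (1, 0)) = 0) {α : ℤ} (hα : α ≠ 0) (i j : ℕ) :
    φ (L (α, i + 1)) (L (-α, j)) = φ (L (α, i)) (L (-α, j + 1)) := by
  have h := hL.cocycle_shift_identity hφ hα i j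
  rw [hL.cocycle_zero_one_eq_zero hq hφ h2, mul_zero, add_zero] at h
  exact mul_left_cancel₀ (by exact_mod_cast (show 1 + q ≠ 0 by omega)) h

theorem cocycle_eq_level_sum (hq : 0 < q) (hL : IsBlockFamily q L) (hφ : IsTwoCocycle φ)
    (h2 : ∀ i : ℕ, φ (L (-1, i)) (L (1, 0)) = 0) {α : ℤ} (hα : α ≠ 0) (i j : ℕ) :
    φ (L (α, i)) (L (-α, j)) = φ (L (α, 0)) (L (-α, i + j)) := by
  induction i generalizing j with
  | zero => rw [zero_add]
  | succ i ih => rw [hL.cocycle_shift hq hφ h2 hα, ih, Nat.add_right_comm, add_assoc]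

theorem cocycle_zero_succ_eq_zero (hq : 0 < q) (hL : IsBlockFamily q L) (hφ : IsTwoCocycle φ)
    (h2 : ∀ i : ℕ, φ (L (-1, i)) (L (1, 0)) = 0) (α : ℤ) (n : ℕ) :
    φ (L (α, 0)) (L (-α, n + 1)) = 0 := by
  obtain rfl | hα := eq_or_ne α 0
  · simpa using hL.cocycle_zero_zero_eq_zero hq hφ h2 (n + 1)
  obtain rfl | hα' := eq_or_ne α (-1)
  · simpa using hL.cocycle_neg_one_zero_eq_zero hq hφ h2 (n + 1)
  have h₀ := hL.cocycle_succ_degree hφ h2 α 0 (n + 1)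
  have h₁ := hL.cocycle_succ_degree hφ h2 α 1 n
  rw [hL.cocycle_eq_level_sum hq hφ h2 (by omega), hL.cocycle_eq_level_sum hq hφ h2 hα,
    add_comm 1 n] at h₁
  push_cast at h₀ h₁
  have h_eq : φ (L (α + 1, 0)) (L (-(α + 1), n + 1)) = φ (L (α, 0)) (L (-α, n + 1)) := by
    linear_combination h₀ - h₁
  have h : ((n : ℂ) + 1 + 3 * q) * φ (L (α, 0)) (L (-α, n + 1)) = 0 := by
    linear_combination ((α : ℂ) * q - q) * h_eq - h₀
  exact (mul_eq_zero.mp h).resolve_left (by exact_mod_cast (show n + 1 + 3 * q ≠ 0 by omega))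

theorem cocycle_diag_eq_zero (hq : 0 < q) (hL : IsBlockFamily q L) (hφ : IsTwoCocycle φ)
    (h2 : ∀ i : ℕ, φ (L (-1, i)) (L (1, 0)) = 0) (α : ℤ) {i : ℕ} (hi : i ≠ 0) :
    φ (L (α, i)) (L (-α, i)) = 0 := by
  obtain rfl | hα := eq_or_ne α 0
  · rw [neg_zero]
    exact hφ.apply_self _
  obtain ⟨m, hm⟩ : ∃ m, i + i = m + 1 := ⟨i + i - 1, by omega⟩
  rw [hL.cocycle_eq_level_sum hq hφ h2 hα, hm]
  exact hL.cocycle_zero_succ_eq_zero hq hφ h2 α m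

theorem cocycle_degree_rec (hq : 0 < q) (hL : IsBlockFamily q L) (hφ : IsTwoCocycle φ)
    (h2 : ∀ i : ℕ, φ (L (-1, i)) (L (1, 0)) = 0) (α : ℤ) :
    ((α : ℂ) - 1) * φ (L (α + 1, 0)) (L (-(α + 1), 0)) =
      ((α : ℂ) + 2) * φ (L (α, 0)) (L (-α, 0)) := by
  have h := hL.cocycle_succ_degree hφ h2 α 0 0
  push_cast at h
  refine mul_left_cancel₀ (by exact_mod_cast hq.ne' : (q : ℂ) ≠ 0) ?_
  linear_combination h

theorem cocycle_level_zero_natCast (hq : 0 < q) (hL : IsBlockFamily q L) (hφ : IsTwoCocycle φ)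
    (h2 : ∀ i : ℕ, φ (L (-1, i)) (L (1, 0)) = 0) :
    ∀ n : ℕ, φ (L (n, 0)) (L (-n, 0)) = (((n : ℂ) ^ 3 - n) / 6) * φ (L (2, 0)) (L (-2, 0))
  | 0 => by simpa using hφ.apply_self (L (0, 0))
  | 1 => by simpa using cocycle_one_zero_eq_zero hφ h2 0
  | n + 2 => by
    induction n with
    | zero => norm_num
    | succ n ih =>
      have h := hL.cocycle_degree_rec hq hφ h2 (n + 2)
      push_cast at h ih ⊢
      rw [show (n : ℤ) + 1 + 2 = n + 2 + 1 by ring]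
      refine mul_left_cancel₀ (by exact_mod_cast n.succ_ne_zero : (n : ℂ) + 1 ≠ 0) ?_
      linear_combination h + ((n : ℂ) + 4) * ih

theorem cocycle_level_zero (hq : 0 < q) (hL : IsBlockFamily q L) (hφ : IsTwoCocycle φ)
    (h2 : ∀ i : ℕ, φ (L (-1, i)) (L (1, 0)) = 0) (α : ℤ) :
    φ (L (α, 0)) (L (-α, 0)) = (((α : ℂ) ^ 3 - α) / 6) * φ (L (2, 0)) (L (-2, 0)) := by
  obtain ⟨n, rfl | rfl⟩ := Int.eq_nat_or_neg α
  · exact_mod_cast hL.cocycle_level_zero_natCast hq hφ h2 n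
  · rw [neg_neg, hφ.1, hL.cocycle_level_zero_natCast hq hφ h2 n]
    push_cast
    ring

end IsBlockFamily

theorem block_cocycle_diagonal_values_general (q : ℕ) (hq : 0 < q)
    (L : Module.Basis (ℤ × ℕ) ℂ B)
    (hL : ∀ (α β : ℤ) (i j : ℕ),
      ⁅L (α, i), L (β, j)⁆ =
        (((β * ((i : ℤ) + q) - α * ((j : ℤ) + q)) : ℤ) : ℂ) • L (α + β, i + j))
    (φ : B →ₗ[ℂ] B →ₗ[ℂ] ℂ) (hφ : IsTwoCocycle φ)
    (h2 : ∀ i : ℕ, φ (L (-1, i)) (L (1, 0)) = 0) :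
    (∀ (α : ℤ) (i : ℕ), i ≠ 0 → φ (L (α, i)) (L (-α, i)) = 0) ∧
    (∀ α : ℤ, φ (L (α, 0)) (L (-α, 0)) =
      (((α : ℂ) ^ 3 - (α : ℂ)) / 6) * φ (L (2, 0)) (L (-2, 0))) :=
  have hL : IsBlockFamily q L := hL
  ⟨fun α _ hi => hL.cocycle_diag_eq_zero hq hφ h2 α hi, hL.cocycle_level_zero hq hφ h2⟩

/-- Let `φ` be a 2-cocycle on the Block type Lie algebra `B(q)` with
`φ(L_{α,i}, L_{0,0}) = 0` for all `α ≠ 0` and `φ(L_{−1,i}, L_{1,0}) = 0` for all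
`i`.  Then (1) `φ(L_{α,i}, L_{−α,i}) = 0` for all `α` whenever `i ≠ 0`, and
(2) `φ(L_{α,0}, L_{−α,0}) = ((α³ − α)/6) φ(L_{2,0}, L_{−2,0})` for all `α`. -/
theorem block_cocycle_diagonal_values (q : ℕ) (hq : 0 < q)
    (L : Module.Basis (ℤ × ℕ) ℂ B)
    (hL : ∀ (α β : ℤ) (i j : ℕ),
      ⁅L (α, i), L (β, j)⁆ =
        (((β * ((i : ℤ) + q) - α * ((j : ℤ) + q)) : ℤ) : ℂ) • L (α + β, i + j))
    (φ : B →ₗ[ℂ] B →ₗ[ℂ] ℂ) (hφ : IsTwoCocycle φ)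
    (h1 : ∀ (α : ℤ) (i : ℕ), α ≠ 0 → φ (L (α, i)) (L (0, 0)) = 0)
    (h2 : ∀ i : ℕ, φ (L (-1, i)) (L (1, 0)) = 0) :
    (∀ (α : ℤ) (i : ℕ), i ≠ 0 → φ (L (α, i)) (L (-α, i)) = 0) ∧
    (∀ α : ℤ, φ (L (α, 0)) (L (-α, 0)) =
      (((α : ℂ) ^ 3 - (α : ℂ)) / 6) * φ (L (2, 0)) (L (-2, 0))) :=
  block_cocycle_diagonal_values_general q hq L hL φ hφ h2
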